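/- There is a universal constant K > 0 such that the following holds. Let (|Ψ⟩, {A_x^a}) be a symmetric projective strategy with r = 3 whose consistency-test acceptance probability is at least 1 − ε, let 1 ≤ k ≤ n, and let R be a family of sub-measurements of arity k. Then the collection Ŝ_x^g := A_x^{g(x_{≤k})} √(R_{x_{>k}}^g) is feasible for the self-improvement convex program for R and achieves objective value at most inc(R,A) + K√ε; in particular, the optimum ω of the program satisfies ω ≤ inc(R,A) + K√ε. -/

import Mathlib

open scoped Kronecker ComplexConjugate ComplexOrder Matrix

namespace MIP

noncomputable section

abbrev Mat (d : ℕ) := Matrix (Fin d) (Fin d) ℂ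

/-- Real part of the trace. -/
def rTr {m : Type*} [Fintype m] (M : Matrix m m ℂ) : ℝ := M.trace.re

/-- Positive semidefinite square root (`0` if the matrix is not PSD). -/
def psqrt {m : Type*} [Fintype m] [DecidableEq m] (A : Matrix m m ℂ) : Matrix m m ℂ :=
  letI := Classical.propDecidable A.PosSemidef
  if h : A.PosSemidef then
    h.1.eigenvectorUnitary.1 * Matrix.diagonal ((↑) ∘ Real.sqrt ∘ h.1.eigenvalues) *
      (star h.1.eigenvectorUnitary : Matrix m m ℂ) else 0

/-- Loewner order `A ≤ B`. -/
def PSDle {m : Type*} [Fintype m] (A B : Matrix m m ℂ) : Prop := (B - A).PosSemidef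

/-- Trace norm of a square complex matrix. -/
def traceNorm {m : Type*} [Fintype m] [DecidableEq m] (M : Matrix m m ℂ) : ℝ :=
  rTr (psqrt (Mᴴ * M))

/-- `‖X‖_ρ² = Tr (X Xᴴ ρ)`. -/
def rhoNormSq {d : ℕ} (ρ X : Mat d) : ℝ := rTr (X * Xᴴ * ρ)

/-- `⟨ψ| M 0 ⊗ ⋯ ⊗ M (r-1) |ψ⟩` (real part). -/
def tExp {r d : ℕ} (ψ : (Fin r → Fin d) → ℂ) (M : Fin r → Mat d) : ℝ :=
  (∑ v : Fin r → Fin d, ∑ w : Fin r → Fin d,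
      conj (ψ v) * (∏ i, M i (v i) (w i)) * ψ w).re

/-- `⟨ψ| M 0 ⊗ ⋯ ⊗ M (r-1) |ψ⟩` (complex value). -/
def tExpC {r d : ℕ} (ψ : (Fin r → Fin d) → ℂ) (M : Fin r → Mat d) : ℂ :=
  ∑ v : Fin r → Fin d, ∑ w : Fin r → Fin d,
      conj (ψ v) * (∏ i, M i (v i) (w i)) * ψ w

/-- Invariance of a vector in `(ℂ^d)^{⊗r}` under all permutations of the factors. -/
def PermInvariant {r d : ℕ} (ψ : (Fin r → Fin d) → ℂ) : Prop :=
  ∀ σ : Equiv.Perm (Fin r), ∀ v, ψ (v ∘ σ) = ψ v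

/-- Reduced density matrix of `|ψ⟩⟨ψ|` on register `i`. -/
def red1 {r d : ℕ} (ψ : (Fin r → Fin d) → ℂ) (i : Fin r) : Mat d :=
  Matrix.of fun j k => ∑ v : Fin r → Fin d,
    if (v i).val = 0 then ψ (Function.update v i j) * conj (ψ (Function.update v i k)) else 0

/-- Reduced density matrix of `|ψ⟩⟨ψ|` on registers `i₁, i₂`. -/
def red2 {r d : ℕ} (ψ : (Fin r → Fin d) → ℂ) (i₁ i₂ : Fin r) :
    Matrix (Fin d × Fin d) (Fin d × Fin d) ℂ :=
  Matrix.of fun a b => ∑ v : Fin r → Fin d,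
    if (v i₁).val = 0 ∧ (v i₂).val = 0 then
      ψ (Function.update (Function.update v i₁ a.1) i₂ a.2) *
        conj (ψ (Function.update (Function.update v i₁ b.1) i₂ b.2))
    else 0

/-- A symmetric projective strategy with `r` provers, questions in `F^n`,
answers in `F`, on local dimension `d`. -/
structure Strategy (r n d : ℕ) (F : Type*) [Field F] [Fintype F] where
  ψ : (Fin r → Fin d) → ℂ
  A : (Fin n → F) → F → Mat d
  unit : ∑ v : Fin r → Fin d, Complex.normSq (ψ v) = 1
  perm : PermInvariant ψ
  herm : ∀ x a, (A x a).IsHermitian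
  proj : ∀ x a, A x a * A x a = A x a
  complete : ∀ x, ∑ a : F, A x a = 1

variable {F : Type*} [Field F] [Fintype F] [DecidableEq F]

/-- Consistency-test acceptance probability. -/
def consProb {r n d : ℕ} (S : Strategy r n d F) : ℝ :=
  (∑ x : Fin n → F, ∑ a : F, tExp S.ψ fun _ => S.A x a) / (Fintype.card F : ℝ) ^ n

/-- Linearity-test acceptance probability in direction `i`. -/
def linProbDir {r n d : ℕ} (S : Strategy r n d F) (i : Fin n) : ℝ :=
  (∑ x : Fin n → F, ∑ yi : F, ∑ zi : F,
      if yi ≠ x i ∧ zi ≠ x i ∧ yi ≠ zi then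
        ∑ α : F, ∑ β : F,
          tExp S.ψ fun j =>
            if j.val = 0 then S.A x (α * x i + β)
            else if j.val = 1 then S.A (Function.update x i yi) (α * yi + β)
            else if j.val = 2 then S.A (Function.update x i zi) (α * zi + β)
            else 1
      else 0) /
    ((Fintype.card F : ℝ) ^ n * ((Fintype.card F : ℝ) - 1) * ((Fintype.card F : ℝ) - 2))

/-- Linearity-test acceptance probability (averaged over the direction). -/
def linProb {r n d : ℕ} (S : Strategy r n d F) : ℝ :=
  (∑ i : Fin n, linProbDir S i) / n

/-- A multilinear function `F^k → F`. -/
def IsMultilinear {k : ℕ} (g : (Fin k → F) → F) : Prop :=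
  ∀ (i : Fin k) (x : Fin k → F), ∃ α β : F, ∀ t : F, g (Function.update x i t) = α * t + β

/-- First `k` coordinates `x_{≤k}`. -/
def xle {n k : ℕ} (hk : k ≤ n) (x : Fin n → F) : Fin k → F :=
  fun j => x (Fin.castLE hk j)

/-- Last `n - k` coordinates `x_{>k}`. -/
def xgt {n : ℕ} (k : ℕ) (hk : k ≤ n) (x : Fin n → F) : Fin (n - k) → F :=
  fun j => x ⟨k + j.val, by have := j.isLt; omega⟩

/-- The restriction `g(·, x_{k+1},…,x_ℓ)` of `g : F^ℓ → F` to its first `k` variables, the last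
`ℓ - k` variables being substituted with the corresponding coordinates of `x ∈ F^n`. -/
def midRestrict {n k ℓ : ℕ} (hkl : k ≤ ℓ) (hl : ℓ ≤ n) (g : (Fin ℓ → F) → F) (x : Fin n → F) :
    (Fin k → F) → F :=
  fun u => g fun j =>
    if h : j.val < k then u ⟨j.val, h⟩ else x ⟨j.val, by have := j.isLt; omega⟩

/-- A family of sub-measurements of arity `k`, with outcomes the multilinear functions
`F^k → F` (the matrices are indexed by all functions, vanishing on non-multilinear ones). -/
structure SubFamily (n d : ℕ) (F : Type*) [Field F] [Fintype F] [DecidableEq F] (k : ℕ) where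
  P : (Fin (n - k) → F) → ((Fin k → F) → F) → Mat d
  psd : ∀ y g, (P y g).PosSemidef
  ml : ∀ y g, ¬ IsMultilinear g → P y g = 0
  sub : ∀ y, (1 - ∑ g : (Fin k → F) → F, P y g).PosSemidef

/-- `cons(P,Q)` for arities `k ≤ ℓ`. -/
def consF {n d k ℓ : ℕ} (hkl : k ≤ ℓ) (hl : ℓ ≤ n)
    (P : SubFamily n d F k) (Q : SubFamily n d F ℓ)
    (ρ : Matrix (Fin d × Fin d) (Fin d × Fin d) ℂ) : ℝ :=
  (∑ x : Fin n → F, ∑ f : (Fin k → F) → F, ∑ g : (Fin ℓ → F) → F,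
      if f = midRestrict hkl hl g x then
        rTr ((P.P (xgt k (hkl.trans hl) x) f ⊗ₖ Q.P (xgt ℓ hl x) g) * ρ)
      else 0) / (Fintype.card F : ℝ) ^ n

/-- `inc(P,Q)` for arities `k ≤ ℓ`. -/
def incF {n d k ℓ : ℕ} (hkl : k ≤ ℓ) (hl : ℓ ≤ n)
    (P : SubFamily n d F k) (Q : SubFamily n d F ℓ)
    (ρ : Matrix (Fin d × Fin d) (Fin d × Fin d) ℂ) : ℝ :=
  (∑ x : Fin n → F, ∑ f : (Fin k → F) → F, ∑ g : (Fin ℓ → F) → F,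
      if f ≠ midRestrict hkl hl g x then
        rTr ((P.P (xgt k (hkl.trans hl) x) f ⊗ₖ Q.P (xgt ℓ hl x) g) * ρ)
      else 0) / (Fintype.card F : ℝ) ^ n

/-- `cons(P,Q)` for arbitrary arities (symmetric convention). -/
def consSym {n d k ℓ : ℕ} (hk : k ≤ n) (hl : ℓ ≤ n)
    (P : SubFamily n d F k) (Q : SubFamily n d F ℓ)
    (ρ : Matrix (Fin d × Fin d) (Fin d × Fin d) ℂ) : ℝ :=
  if h : k ≤ ℓ then consF h hl P Q ρ else consF (le_of_not_ge h) hk Q P ρ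

/-- `inc(P,A)` where `A` are the strategy's measurements (regarded as the arity-0 family). -/
def incA {n d k : ℕ} (hk : k ≤ n) (P : SubFamily n d F k)
    (A : (Fin n → F) → F → Mat d) (ρ : Matrix (Fin d × Fin d) (Fin d × Fin d) ℂ) : ℝ :=
  (∑ x : Fin n → F, ∑ g : (Fin k → F) → F, ∑ a : F,
      if a ≠ g (xle hk x) then rTr ((P.P (xgt k hk x) g ⊗ₖ A x a) * ρ) else 0) /
    (Fintype.card F : ℝ) ^ n

/-- `Tr_ρ(P)` for a family of sub-measurements, against the one-register density `ρ`. -/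
def trF {n d k : ℕ} (P : SubFamily n d F k) (ρ : Mat d) : ℝ :=
  (∑ y : Fin (n - k) → F, ∑ g : (Fin k → F) → F, rTr (P.P y g * ρ)) /
    (Fintype.card F : ℝ) ^ (n - k)

/-- Merge first `k` coordinates `u` and last `n - k` coordinates `y` into a point of `F^n`. -/
def merge {n k : ℕ} (hk : k ≤ n) (u : Fin k → F) (y : Fin (n - k) → F) : Fin n → F :=
  fun j => if h : j.val < k then u ⟨j.val, h⟩ else y ⟨j.val - k, by have := j.isLt; omega⟩

/-- `E_{x_{≤k}} Ŝ_x^g`, with the last coordinates fixed to `y`. -/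
def avgLow {n d k : ℕ} (hk : k ≤ n)
    (Sh : (Fin n → F) → ((Fin k → F) → F) → Mat d)
    (y : Fin (n - k) → F) (g : (Fin k → F) → F) : Mat d :=
  ((Fintype.card F : ℂ) ^ k)⁻¹ • ∑ u : Fin k → F, Sh (merge hk u y) g

/-- Feasibility for the self-improvement convex program. -/
def Feasible {n d k : ℕ} (hk : k ≤ n) (A : (Fin n → F) → F → Mat d)
    (Sh : (Fin n → F) → ((Fin k → F) → F) → Mat d) : Prop :=
  (∀ x g, ¬ IsMultilinear g → Sh x g = 0) ∧
    ∀ x a, PSDle (∑ g : (Fin k → F) → F,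
      if g (xle hk x) = a then Sh x g * (Sh x g)ᴴ else 0) (A x a)

/-- Objective of the self-improvement convex program. -/
def objective {n d k : ℕ} (hk : k ≤ n) (R : SubFamily n d F k) (ρ : Mat d)
    (Sh : (Fin n → F) → ((Fin k → F) → F) → Mat d) : ℝ :=
  (∑ x : Fin n → F, ∑ g : (Fin k → F) → F,
      rhoNormSq ρ (Sh x g - psqrt (R.P (xgt k hk x) g))) / (Fintype.card F : ℝ) ^ n

/-- Optimum value `ω` of the self-improvement convex program. -/
def progOpt {n d k : ℕ} (hk : k ≤ n) (A : (Fin n → F) → F → Mat d)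
    (R : SubFamily n d F k) (ρ : Mat d) : ℝ :=
  sInf {w | ∃ Sh, Feasible hk A Sh ∧ objective hk R ρ Sh = w}


/-- Remove the `i`-th coordinate: `x_{¬i}`. -/
def removeCoord {n : ℕ} (i : Fin n) (x : Fin n → F) : Fin (n - 1) → F :=
  fun j => if h : j.val < i.val then x ⟨j.val, by have := j.isLt; omega⟩
    else x ⟨j.val + 1, by have := j.isLt; omega⟩

/-- Partial trace over the middle factor of `ℂ^d ⊗ ℂ^d ⊗ ℂ^{d'}`. -/
def ptrace2 {d d' : ℕ} (σ : Matrix (Fin d × Fin d × Fin d') (Fin d × Fin d × Fin d') ℂ) :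
    Matrix (Fin d × Fin d') (Fin d × Fin d') ℂ :=
  Matrix.of fun a b => ∑ m : Fin d, σ (a.1, m, a.2) (b.1, m, b.2)

/-- Partial trace over the first factor of `ℂ^d ⊗ ℂ^{d'}`. -/
def ptrFst {d d' : ℕ} (σ : Matrix (Fin d × Fin d') (Fin d × Fin d') ℂ) :
    Matrix (Fin d') (Fin d') ℂ :=
  Matrix.of fun k l => ∑ m : Fin d, σ (m, k) (m, l)

/-- Partial trace over the second factor of `ℂ^d ⊗ ℂ^{d'}`. -/
def ptrSnd {d d' : ℕ} (σ : Matrix (Fin d × Fin d') (Fin d × Fin d') ℂ) : Mat d :=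
  Matrix.of fun i j => ∑ m : Fin d', σ (i, m) (j, m)



/-!
View `ψ` as a vector `φ ∈ ℂ^d ⊗ ℂ^d ⊗ ℂ^d`, fix a question `x`, and write `Q = R^g_{x>k}` and
`B = 1 - A_x^{g(x≤k)}`. The `g`-th objective term is `‖(√Q B ⊗ 1 ⊗ 1) φ‖²` and the `g`-th
inconsistency term is `‖(√Q ⊗ B ⊗ 1) φ‖²`; the two vectors differ by
`(√Q ⊗ 1 ⊗ 1)(1 ⊗ A ⊗ 1 - A ⊗ 1 ⊗ 1) φ`. Grouping the outcomes `g` by the answer `a = g(x≤k)`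
and using `∑_g Q ≤ 1`, these differences have total squared norm at most
`δ_x = ∑_a ‖(1 ⊗ A_x^a ⊗ 1 - A_x^a ⊗ 1 ⊗ 1) φ‖² = 2 - 2 ∑_a ⟨A_x^a ⊗ A_x^a ⊗ 1⟩`, and
`⟨A ⊗ A ⊗ 1⟩ ≥ ⟨A ⊗ A ⊗ A⟩` bounds `δ_x` by twice the rejection probability of the consistency
test at `x`. Minkowski's inequality over `g` gives objective ≤ inconsistency `+ 4 √δ_x` at each
question, and Cauchy–Schwarz over `x` turns `E_x √δ_x` into `√(2ε)`, so `K = 6 > 4√2` works.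
Feasibility is `∑_{g(x≤k) = a} A √R √R A = A (∑_{g(x≤k) = a} R) A ≤ A`.
-/

section PSqrt

open scoped MatrixOrder

variable {m : Type*} [Fintype m] [DecidableEq m] {A : Matrix m m ℂ}

lemma psqrt_eq_cfc (hA : A.PosSemidef) : psqrt A = cfc Real.sqrt A := by
  rw [psqrt, dif_pos hA, hA.1.cfc_eq]
  rfl

lemma posSemidef_psqrt (hA : A.PosSemidef) : (psqrt A).PosSemidef := by
  rw [psqrt_eq_cfc hA, ← Matrix.nonneg_iff_posSemidef]
  exact cfc_nonneg fun x _ => Real.sqrt_nonneg x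

lemma psqrt_mul_self (hA : A.PosSemidef) : psqrt A * psqrt A = A := by
  rw [psqrt_eq_cfc hA, ← cfc_mul ..]
  conv_rhs => rw [← cfc_id' ℝ A]
  exact cfc_congr fun x hx => Real.mul_self_sqrt (spectrum_nonneg_of_nonneg hA.nonneg hx)

lemma psqrt_zero : psqrt (0 : Matrix m m ℂ) = 0 := by
  simp [psqrt_eq_cfc Matrix.PosSemidef.zero]

end PSqrt

open scoped MatrixOrder in
lemma posSemidef_of_isStarProjection {m : Type*} [Fintype m] {P : Matrix m m ℂ}
    (hP : IsStarProjection P) : P.PosSemidef :=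
  Matrix.nonneg_iff_posSemidef.mp hP.nonneg

lemma posSemidef_one_sub_sum_subset {m G : Type*} [Fintype m] [DecidableEq m] [Fintype G]
    {Q : G → Matrix m m ℂ} (hQ : ∀ g, (Q g).PosSemidef) (hQ1 : (1 - ∑ g, Q g).PosSemidef)
    (s : Finset G) :
    (1 - ∑ g ∈ s, Q g).PosSemidef := by
  classical
  have h : 1 - ∑ g ∈ s, Q g = (1 - ∑ g, Q g) + ∑ g ∈ Finset.univ \ s, Q g := by
    rw [← Finset.sum_sdiff (Finset.subset_univ s)]
    abel
  exact h ▸ hQ1.add (Matrix.posSemidef_sum _ fun g _ => hQ g)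

section Kronecker

variable {R l m n p ι : Type*} [Ring R]

lemma sub_kronecker (A₁ A₂ : Matrix l m R) (B : Matrix n p R) :
    (A₁ - A₂) ⊗ₖ B = A₁ ⊗ₖ B - A₂ ⊗ₖ B := by
  ext; simp [sub_mul]

lemma kronecker_sub (A : Matrix l m R) (B₁ B₂ : Matrix n p R) :
    A ⊗ₖ (B₁ - B₂) = A ⊗ₖ B₁ - A ⊗ₖ B₂ := by
  ext; simp [mul_sub]

lemma sum_kronecker (s : Finset ι) (A : ι → Matrix l m R) (B : Matrix n p R) :
    (∑ i ∈ s, A i) ⊗ₖ B = ∑ i ∈ s, A i ⊗ₖ B := by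
  ext; simp [Matrix.sum_apply, Finset.sum_mul]

lemma kronecker_sum (s : Finset ι) (A : Matrix l m R) (B : ι → Matrix n p R) :
    A ⊗ₖ (∑ i ∈ s, B i) = ∑ i ∈ s, A ⊗ₖ B i := by
  ext; simp [Matrix.sum_apply, Finset.mul_sum]

end Kronecker

section Expect

open WithLp

variable {ι : Type*} [Fintype ι]

def expect (φ : ι → ℂ) : Matrix ι ι ℂ →ₗ[ℝ] ℝ where
  toFun M := (star φ ⬝ᵥ M *ᵥ φ).re
  map_add' M N := by simp [Matrix.add_mulVec]
  map_smul' c M := by simp [Matrix.smul_mulVec]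

lemma expect_apply (φ : ι → ℂ) (M : Matrix ι ι ℂ) : expect φ M = (star φ ⬝ᵥ M *ᵥ φ).re := rfl

lemma expect_nonneg (φ : ι → ℂ) {M : Matrix ι ι ℂ} (hM : M.PosSemidef) : 0 ≤ expect φ M :=
  (Complex.nonneg_iff.mp (hM.dotProduct_mulVec_nonneg φ)).1

lemma expect_mono (φ : ι → ℂ) {M N : Matrix ι ι ℂ} (h : (N - M).PosSemidef) :
    expect φ M ≤ expect φ N :=
  sub_nonneg.mp (map_sub (expect φ) N M ▸ expect_nonneg φ h)

lemma expect_mulVec (φ : ι → ℂ) (M N : Matrix ι ι ℂ) :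
    expect (M *ᵥ φ) N = expect φ (Mᴴ * N * M) := by
  simp only [expect_apply, Matrix.star_mulVec, ← Matrix.dotProduct_mulVec, Matrix.mulVec_mulVec,
    Matrix.mul_assoc]

variable [DecidableEq ι]

lemma expect_one {φ : ι → ℂ} (hφ : star φ ⬝ᵥ φ = 1) : expect φ 1 = 1 := by
  simp [expect_apply, hφ]

lemma norm_toLp_sq (φ : ι → ℂ) : ‖toLp 2 φ‖ ^ 2 = expect φ 1 := by
  rw [@norm_sq_eq_re_inner ℂ, EuclideanSpace.inner_toLp_toLp, expect_apply, Matrix.one_mulVec,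
    dotProduct_comm]
  rfl

lemma norm_toLp_mulVec_sq (φ : ι → ℂ) (M : Matrix ι ι ℂ) :
    ‖toLp 2 (M *ᵥ φ)‖ ^ 2 = expect φ (Mᴴ * M) := by
  rw [norm_toLp_sq, expect_mulVec, Matrix.mul_one]

end Expect

lemma sqrt_sum_norm_sq_le {G E : Type*} [Fintype G] [SeminormedAddCommGroup E] (u v : G → E) :
    √(∑ g, ‖u g‖ ^ 2) ≤ √(∑ g, ‖v g‖ ^ 2) + √(∑ g, ‖u g - v g‖ ^ 2) := by
  simpa [PiLp.norm_eq_of_L2] using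
    norm_le_norm_add_norm_sub' (WithLp.toLp 2 u : PiLp 2 fun _ : G => E) (WithLp.toLp 2 v)

lemma le_add_four_mul_sqrt_of_sqrt_le {L I δ : ℝ} (hI : 0 ≤ I) (hI1 : I ≤ 1) (hδ : 0 ≤ δ)
    (hδ4 : δ ≤ 4) (h : √L ≤ √I + √δ) : L ≤ I + 4 * √δ := by
  rcases lt_or_ge L 0 with hL | hL
  · nlinarith [Real.sqrt_nonneg δ]
  have hsI : √I ≤ 1 := Real.sqrt_le_one.mpr hI1
  have hsδ : √δ ≤ 2 := by
    rw [show (2 : ℝ) = √4 by norm_num]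
    exact Real.sqrt_le_sqrt hδ4
  have hsq := pow_le_pow_left₀ (Real.sqrt_nonneg L) h 2
  rw [Real.sq_sqrt hL, add_sq, Real.sq_sqrt hI, Real.sq_sqrt hδ] at hsq
  nlinarith [Real.sqrt_nonneg I, Real.sqrt_nonneg δ, Real.sq_sqrt hδ]

section Registers

open WithLp

variable {m m' α G : Type*} [Fintype m] [DecidableEq m] [Fintype m'] [DecidableEq m']
  [Fintype α] [Fintype G]

def consistencyDefect (φ : (m × m) × m' → ℂ) (A : α → Matrix m m ℂ) : ℝ :=
  ∑ a, ‖toLp 2 ((1 ⊗ₖ A a ⊗ₖ (1 : Matrix m' m' ℂ) - A a ⊗ₖ 1 ⊗ₖ 1) *ᵥ φ)‖ ^ 2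

lemma expect_kronecker_one_one_le (φ : (m × m) × m' → ℂ) {T : Matrix m m ℂ}
    (hT : (1 - T).PosSemidef) : expect φ (T ⊗ₖ 1 ⊗ₖ (1 : Matrix m' m' ℂ)) ≤ expect φ 1 := by
  refine expect_mono φ ?_
  rw [← Matrix.one_kronecker_one, ← Matrix.one_kronecker_one, ← sub_kronecker, ← sub_kronecker]
  exact (hT.kronecker .one).kronecker .one

theorem sqrt_sum_expect_conj_le (φ : (m × m) × m' → ℂ) {A : α → Matrix m m ℂ}
    (hA : ∀ a, IsStarProjection (A a)) {Q : G → Matrix m m ℂ} (hQ : ∀ g, (Q g).PosSemidef)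
    (hQ1 : (1 - ∑ g, Q g).PosSemidef) (val : G → α) :
    √(∑ g, expect φ (((1 - A (val g)) * Q g * (1 - A (val g))) ⊗ₖ 1 ⊗ₖ (1 : Matrix m' m' ℂ))) ≤
      √(∑ g, expect φ (Q g ⊗ₖ (1 - A (val g)) ⊗ₖ (1 : Matrix m' m' ℂ))) +
        √(consistencyDefect φ A) := by
  classical
  set B : G → Matrix m m ℂ := fun g => 1 - A (val g)
  set S : G → Matrix m m ℂ := fun g => psqrt (Q g)
  have hB g : (B g).IsHermitian := (hA _).one_sub.isSelfAdjoint.isHermitian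
  have hBB g : B g * B g = B g := (hA _).one_sub.isIdempotentElem.eq
  have hS g : (S g).IsHermitian := (posSemidef_psqrt (hQ g)).isHermitian
  have hSS g : S g * S g = Q g := psqrt_mul_self (hQ g)
  let D : α → Matrix ((m × m) × m') ((m × m) × m') ℂ := fun a =>
    1 ⊗ₖ A a ⊗ₖ 1 - A a ⊗ₖ 1 ⊗ₖ 1
  let u : G → EuclideanSpace ℂ ((m × m) × m') := fun g =>
    toLp 2 (((S g * B g) ⊗ₖ 1 ⊗ₖ 1) *ᵥ φ)
  let v : G → EuclideanSpace ℂ ((m × m) × m') := fun g => toLp 2 ((S g ⊗ₖ B g ⊗ₖ 1) *ᵥ φ)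
  have hu g : ‖u g‖ ^ 2 = expect φ ((B g * Q g * B g) ⊗ₖ 1 ⊗ₖ 1) := by
    rw [norm_toLp_mulVec_sq]
    simp only [Matrix.conjTranspose_kronecker, Matrix.conjTranspose_mul, Matrix.conjTranspose_one,
      (hB g).eq, (hS g).eq, ← Matrix.mul_kronecker_mul, Matrix.mul_one, Matrix.mul_assoc,
      ← Matrix.mul_assoc (S g), hSS]
  have hv g : ‖v g‖ ^ 2 = expect φ (Q g ⊗ₖ B g ⊗ₖ 1) := by
    rw [norm_toLp_mulVec_sq]
    simp only [Matrix.conjTranspose_kronecker, Matrix.conjTranspose_one, (hB g).eq, (hS g).eq,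
      ← Matrix.mul_kronecker_mul, Matrix.mul_one, hSS, hBB]
  have huv g : ‖u g - v g‖ ^ 2 = expect (D (val g) *ᵥ φ) (Q g ⊗ₖ 1 ⊗ₖ 1) := by
    have h : (S g * B g) ⊗ₖ 1 ⊗ₖ (1 : Matrix m' m' ℂ) - S g ⊗ₖ B g ⊗ₖ 1 =
        (S g ⊗ₖ 1 ⊗ₖ 1) * D (val g) := by
      simp only [B, D, mul_sub, sub_kronecker, kronecker_sub, ← Matrix.mul_kronecker_mul,
        Matrix.mul_one, Matrix.one_mul]
      abel
    rw [← WithLp.toLp_sub, ← Matrix.sub_mulVec, h, ← Matrix.mulVec_mulVec, norm_toLp_mulVec_sq]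
    simp only [Matrix.conjTranspose_kronecker, Matrix.conjTranspose_one, (hS g).eq,
      ← Matrix.mul_kronecker_mul, Matrix.mul_one, hSS]
  have hdefect : ∑ g, ‖u g - v g‖ ^ 2 ≤ consistencyDefect φ A := by
    calc ∑ g, ‖u g - v g‖ ^ 2
        = ∑ a, ∑ g ∈ Finset.univ.filter (val · = a), expect (D a *ᵥ φ) (Q g ⊗ₖ 1 ⊗ₖ 1) := by
          rw [← Finset.sum_fiberwise Finset.univ val]
          exact Finset.sum_congr rfl fun a _ => Finset.sum_congr rfl fun g hg => by
            rw [huv, (Finset.mem_filter.mp hg).2]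
      _ ≤ ∑ a, expect (D a *ᵥ φ) 1 := Finset.sum_le_sum fun a _ => by
          rw [← map_sum, ← sum_kronecker, ← sum_kronecker]
          exact expect_kronecker_one_one_le _ (posSemidef_one_sub_sum_subset hQ hQ1 _)
      _ = consistencyDefect φ A := by simp only [consistencyDefect, norm_toLp_sq, D]
  calc _ = √(∑ g, ‖u g‖ ^ 2) := by simp only [hu, B]
    _ ≤ √(∑ g, ‖v g‖ ^ 2) + √(∑ g, ‖u g - v g‖ ^ 2) := sqrt_sum_norm_sq_le u v
    _ ≤ _ := by
        simp only [hv]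
        gcongr

theorem consistencyDefect_eq {φ : (m × m) × m' → ℂ} (hφ : star φ ⬝ᵥ φ = 1)
    {A : α → Matrix m m ℂ} (hA : ∀ a, IsStarProjection (A a)) (hA1 : ∑ a, A a = 1) :
    consistencyDefect φ A = 2 - 2 * ∑ a, expect φ (A a ⊗ₖ A a ⊗ₖ (1 : Matrix m' m' ℂ)) := by
  have hterm a : ‖WithLp.toLp 2 ((1 ⊗ₖ A a ⊗ₖ (1 : Matrix m' m' ℂ) - A a ⊗ₖ 1 ⊗ₖ 1) *ᵥ φ)‖ ^ 2 =
      expect φ (1 ⊗ₖ A a ⊗ₖ 1) + expect φ (A a ⊗ₖ 1 ⊗ₖ 1) - 2 * expect φ (A a ⊗ₖ A a ⊗ₖ 1) := by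
    rw [norm_toLp_mulVec_sq]
    simp only [Matrix.conjTranspose_sub, Matrix.conjTranspose_kronecker, Matrix.conjTranspose_one,
      (hA a).isSelfAdjoint.isHermitian.eq, mul_sub, sub_mul, ← Matrix.mul_kronecker_mul,
      Matrix.mul_one, Matrix.one_mul, (hA a).isIdempotentElem.eq, map_sub]
    ring
  have h₁ : ∑ a, expect φ (1 ⊗ₖ A a ⊗ₖ (1 : Matrix m' m' ℂ)) = 1 := by
    simp only [← map_sum, ← sum_kronecker, ← kronecker_sum, hA1, Matrix.one_kronecker_one,
      expect_one hφ]
  have h₂ : ∑ a, expect φ (A a ⊗ₖ 1 ⊗ₖ (1 : Matrix m' m' ℂ)) = 1 := by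
    simp only [← map_sum, ← sum_kronecker, hA1, Matrix.one_kronecker_one, expect_one hφ]
  simp only [consistencyDefect, hterm, Finset.sum_sub_distrib, Finset.sum_add_distrib, h₁, h₂,
    ← Finset.mul_sum]
  ring

theorem sum_expect_conj_le {φ : (m × m) × m' → ℂ} (hφ : star φ ⬝ᵥ φ = 1)
    {A : α → Matrix m m ℂ} (hA : ∀ a, IsStarProjection (A a)) (hA1 : ∑ a, A a = 1)
    {Q : G → Matrix m m ℂ} (hQ : ∀ g, (Q g).PosSemidef) (hQ1 : (1 - ∑ g, Q g).PosSemidef)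
    (val : G → α) :
    ∑ g, expect φ (((1 - A (val g)) * Q g * (1 - A (val g))) ⊗ₖ 1 ⊗ₖ (1 : Matrix m' m' ℂ)) ≤
      ∑ g, expect φ (Q g ⊗ₖ (1 - A (val g)) ⊗ₖ (1 : Matrix m' m' ℂ)) +
        4 * √(consistencyDefect φ A) := by
  have hP a := posSemidef_of_isStarProjection (hA a)
  have hB a := posSemidef_of_isStarProjection (hA a).one_sub
  have hinc : ∑ g, expect φ (Q g ⊗ₖ (1 - A (val g)) ⊗ₖ (1 : Matrix m' m' ℂ)) ≤ 1 :=
    calc _ ≤ ∑ g, expect φ (Q g ⊗ₖ 1 ⊗ₖ (1 : Matrix m' m' ℂ)) :=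
          Finset.sum_le_sum fun g _ => expect_mono φ <| by
            rw [← sub_kronecker, ← kronecker_sub, sub_sub_cancel]
            exact ((hQ g).kronecker (hP _)).kronecker .one
      _ ≤ expect φ 1 := by
          rw [← map_sum, ← sum_kronecker, ← sum_kronecker]
          exact expect_kronecker_one_one_le φ hQ1
      _ = 1 := expect_one hφ
  have hδ : consistencyDefect φ A ≤ 2 := by
    rw [consistencyDefect_eq hφ hA hA1]
    have := Finset.sum_nonneg fun a (_ : a ∈ Finset.univ) =>
      expect_nonneg φ (((hP a).kronecker (hP a)).kronecker (.one : (1 : Matrix m' m' ℂ).PosSemidef))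
    linarith
  refine le_add_four_mul_sqrt_of_sqrt_le ?_ hinc (Finset.sum_nonneg fun a _ => sq_nonneg _)
    (by linarith) (sqrt_sum_expect_conj_le φ hA hQ hQ1 val)
  exact Finset.sum_nonneg fun g _ => expect_nonneg φ (((hQ g).kronecker (hB _)).kronecker .one)

end Registers

section TripleState

variable {d : ℕ}

-- Left-nested, to match `M₀ ⊗ₖ M₁ ⊗ₖ M₂ = (M₀ ⊗ₖ M₁) ⊗ₖ M₂`.
def tripleEquiv (α : Type*) : (α × α) × α ≃ (Fin 3 → α) where
  toFun p := ![p.1.1, p.1.2, p.2]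
  invFun v := ((v 0, v 1), v 2)
  left_inv _ := rfl
  right_inv v := by ext i; fin_cases i <;> rfl

@[simp] lemma tripleEquiv_apply {α : Type*} (p : (α × α) × α) :
    tripleEquiv α p = ![p.1.1, p.1.2, p.2] := rfl

def tripleVec (ψ : (Fin 3 → Fin d) → ℂ) : (Fin d × Fin d) × Fin d → ℂ :=
  ψ ∘ tripleEquiv (Fin d)

lemma star_tripleVec_dotProduct_self {ψ : (Fin 3 → Fin d) → ℂ}
    (hψ : ∑ v, Complex.normSq (ψ v) = 1) : star (tripleVec ψ) ⬝ᵥ tripleVec ψ = 1 := by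
  simp only [dotProduct, tripleVec, Function.comp_apply, Pi.star_apply, RCLike.star_def,
    ← Complex.normSq_eq_conj_mul_self]
  rw [(tripleEquiv (Fin d)).sum_comp (fun v => (Complex.normSq (ψ v) : ℂ)), ← Complex.ofReal_sum,
    hψ, Complex.ofReal_one]

lemma tExp_eq_expect (ψ : (Fin 3 → Fin d) → ℂ) (M : Fin 3 → Mat d) :
    tExp ψ M = expect (tripleVec ψ) (M 0 ⊗ₖ M 1 ⊗ₖ M 2) := by
  rw [tExp, expect_apply, ← (tripleEquiv (Fin d)).sum_comp]
  simp only [← (tripleEquiv (Fin d)).sum_comp (fun w => _ * ψ w), dotProduct, Matrix.mulVec,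
    Finset.mul_sum, Fin.prod_univ_three, tripleVec, Function.comp_apply, Pi.star_apply,
    RCLike.star_def, Matrix.kroneckerMap_apply, tripleEquiv_apply]
  congr 1
  refine Finset.sum_congr rfl fun p _ => Finset.sum_congr rfl fun q _ => ?_
  simp only [Matrix.cons_val_zero, Matrix.cons_val_one, Matrix.cons_val_two, Matrix.vecHead,
    Matrix.vecTail, Function.comp_apply, Fin.succ_zero_eq_one]
  ring

lemma red2_apply (ψ : (Fin 3 → Fin d) → ℂ) (p q : Fin d × Fin d) :
    red2 ψ 0 1 p q = ∑ c, tripleVec ψ (p, c) * conj (tripleVec ψ (q, c)) := by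
  have : NeZero d := ⟨p.1.pos.ne'⟩
  have hupd (v : (Fin d × Fin d) × Fin d) (x y : Fin d) :
      Function.update (Function.update (tripleEquiv (Fin d) v) 0 x) 1 y =
        tripleEquiv (Fin d) ((x, y), v.2) := by
    ext i; fin_cases i <;> rfl
  simp only [red2, Matrix.of_apply, ← (tripleEquiv (Fin d)).sum_comp, hupd, Fintype.sum_prod_type]
  simp [tripleVec, Fin.val_eq_zero_iff, ite_and]

lemma red1_eq_ptrSnd (ψ : (Fin 3 → Fin d) → ℂ) : red1 ψ 0 = ptrSnd (red2 ψ 0 1) := by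
  ext j k
  have : NeZero d := ⟨j.pos.ne'⟩
  have hupd (v : (Fin d × Fin d) × Fin d) (x : Fin d) :
      Function.update (tripleEquiv (Fin d) v) 0 x = tripleEquiv (Fin d) ((x, v.1.2), v.2) := by
    ext i; fin_cases i <;> rfl
  simp only [red1, ptrSnd, red2_apply, Matrix.of_apply, ← (tripleEquiv (Fin d)).sum_comp, hupd,
    Fintype.sum_prod_type]
  simp [tripleVec, Fin.val_eq_zero_iff]

lemma trace_mul_ptrSnd {d' : ℕ} (M : Mat d) (σ : Matrix (Fin d × Fin d') (Fin d × Fin d') ℂ) :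
    (M * ptrSnd σ).trace = ((M ⊗ₖ 1) * σ).trace := by
  simp only [Matrix.trace, Matrix.diag_apply, Matrix.mul_apply, ptrSnd, Matrix.of_apply,
    Fintype.sum_prod_type, Matrix.kroneckerMap_apply, Matrix.one_apply]
  simp only [Finset.mul_sum, mul_ite, mul_one, mul_zero, ite_mul, zero_mul, Finset.sum_ite_eq,
    Finset.mem_univ, ↓reduceIte]
  exact Finset.sum_congr rfl fun i _ => Finset.sum_comm

lemma trace_mul_sum_mul_conj {κ ν : Type*} [Fintype κ] [Fintype ν] [DecidableEq ν]
    (X : Matrix κ κ ℂ) (φ : κ × ν → ℂ) :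
    (X * Matrix.of fun p q => ∑ c, φ (p, c) * conj (φ (q, c))).trace =
      star φ ⬝ᵥ (X ⊗ₖ 1) *ᵥ φ := by
  simp only [Matrix.trace, Matrix.diag_apply, Matrix.mul_apply, Matrix.of_apply, Finset.mul_sum,
    dotProduct, Pi.star_apply, RCLike.star_def, Matrix.mulVec, Matrix.kroneckerMap_apply,
    Matrix.one_apply, mul_ite, mul_one, mul_zero, ite_mul, zero_mul, Fintype.sum_prod_type,
    Finset.sum_ite_eq, Finset.mem_univ, ↓reduceIte]
  refine Finset.sum_congr rfl fun p _ => Finset.sum_comm.trans ?_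
  exact Finset.sum_congr rfl fun c _ => Finset.sum_congr rfl fun q _ => by ring

lemma rTr_mul_red2 (ψ : (Fin 3 → Fin d) → ℂ) (X : Matrix (Fin d × Fin d) (Fin d × Fin d) ℂ) :
    rTr (X * red2 ψ 0 1) = expect (tripleVec ψ) (X ⊗ₖ 1) := by
  have : red2 ψ 0 1 = Matrix.of fun p q => ∑ c, tripleVec ψ (p, c) * conj (tripleVec ψ (q, c)) :=
    Matrix.ext (red2_apply ψ)
  rw [rTr, this, trace_mul_sum_mul_conj, expect_apply]

lemma rTr_mul_red1 (ψ : (Fin 3 → Fin d) → ℂ) (M : Mat d) :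
    rTr (M * red1 ψ 0) = expect (tripleVec ψ) (M ⊗ₖ 1 ⊗ₖ 1) := by
  rw [rTr, red1_eq_ptrSnd, trace_mul_ptrSnd, ← rTr, rTr_mul_red2]

lemma consistencyDefect_le {α : Type*} [Fintype α] {ψ : (Fin 3 → Fin d) → ℂ}
    (hψ : ∑ v, Complex.normSq (ψ v) = 1) {A : α → Mat d} (hA : ∀ a, IsStarProjection (A a))
    (hA1 : ∑ a, A a = 1) :
    consistencyDefect (tripleVec ψ) A ≤ 2 - 2 * ∑ a, tExp ψ fun _ => A a := by
  rw [consistencyDefect_eq (star_tripleVec_dotProduct_self hψ) hA hA1]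
  have hle a : tExp ψ (fun _ => A a) ≤ expect (tripleVec ψ) (A a ⊗ₖ A a ⊗ₖ 1) := by
    have hP := posSemidef_of_isStarProjection (hA a)
    rw [tExp_eq_expect]
    refine expect_mono _ ?_
    rw [← kronecker_sub]
    exact (hP.kronecker hP).kronecker (posSemidef_of_isStarProjection (hA a).one_sub)
  linarith [Finset.sum_le_sum fun a (_ : a ∈ Finset.univ) => hle a]

lemma rhoNormSq_red1_nonneg (ψ : (Fin 3 → Fin d) → ℂ) (X : Mat d) :
    0 ≤ rhoNormSq (red1 ψ 0) X := by
  rw [rhoNormSq, rTr_mul_red1]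
  exact expect_nonneg _
    (((Matrix.posSemidef_self_mul_conjTranspose X).kronecker .one).kronecker .one)

lemma rhoNormSq_red1_mul_psqrt_sub (ψ : (Fin 3 → Fin d) → ℂ) {P Q : Mat d}
    (hP : P.IsHermitian) (hQ : Q.PosSemidef) :
    rhoNormSq (red1 ψ 0) (P * psqrt Q - psqrt Q) =
      expect (tripleVec ψ) (((1 - P) * Q * (1 - P)) ⊗ₖ 1 ⊗ₖ 1) := by
  have h : P * psqrt Q - psqrt Q = -((1 - P) * psqrt Q) := by noncomm_ring
  rw [rhoNormSq, rTr_mul_red1, h, Matrix.conjTranspose_neg, neg_mul_neg, Matrix.conjTranspose_mul,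
    (posSemidef_psqrt hQ).isHermitian.eq, (Matrix.isHermitian_one.sub hP).eq, Matrix.mul_assoc,
    ← Matrix.mul_assoc (psqrt Q), psqrt_mul_self hQ, Matrix.mul_assoc]

lemma sum_ne_rTr_kronecker_mul_red2 {α : Type*} [Fintype α] [DecidableEq α]
    (ψ : (Fin 3 → Fin d) → ℂ) {A : α → Mat d} (hA : ∑ a, A a = 1) (Q : Mat d) (c : α) :
    ∑ a, (if a ≠ c then rTr ((Q ⊗ₖ A a) * red2 ψ 0 1) else 0) =
      expect (tripleVec ψ) (Q ⊗ₖ (1 - A c) ⊗ₖ 1) := by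
  have hc : 1 - A c = ∑ a ∈ Finset.univ.erase c, A a := by
    rw [Finset.sum_erase_eq_sub (Finset.mem_univ c), hA]
  rw [← Finset.sum_filter, Finset.filter_ne', hc]
  simp only [rTr_mul_red2, kronecker_sum, sum_kronecker, map_sum]

end TripleState

section Rounding

variable {n d : ℕ}

lemma Strategy.isStarProjection {r : ℕ} {K : Type*} [Field K] [Fintype K] (S : Strategy r n d K)
    (x : Fin n → K) (a : K) : IsStarProjection (S.A x a) :=
  ⟨S.proj x a, (S.herm x a).isSelfAdjoint⟩

theorem feasible_rounding {r k : ℕ} (S : Strategy r n d F) (hkn : k ≤ n) (R : SubFamily n d F k) :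
    Feasible hkn S.A (fun x g => S.A x (g (xle hkn x)) * psqrt (R.P (xgt k hkn x) g)) := by
  refine ⟨fun x g hg => by simp [R.ml _ _ hg, psqrt_zero], fun x a => ?_⟩
  set T := ∑ g ∈ Finset.univ.filter (· (xle hkn x) = a), R.P (xgt k hkn x) g
  have hsum : (∑ g : (Fin k → F) → F, if g (xle hkn x) = a then
      S.A x (g (xle hkn x)) * psqrt (R.P (xgt k hkn x) g) *
        (S.A x (g (xle hkn x)) * psqrt (R.P (xgt k hkn x) g))ᴴ else 0) = S.A x a * T * S.A x a := by
    rw [← Finset.sum_filter, Finset.mul_sum, Finset.sum_mul]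
    refine Finset.sum_congr rfl fun g hg => ?_
    have hQ := R.psd (xgt k hkn x) g
    rw [(Finset.mem_filter.mp hg).2, Matrix.conjTranspose_mul, (posSemidef_psqrt hQ).isHermitian.eq,
      (S.herm x a).eq, Matrix.mul_assoc, ← Matrix.mul_assoc (psqrt _), psqrt_mul_self hQ,
      Matrix.mul_assoc]
  have hgap : S.A x a - S.A x a * T * S.A x a = S.A x a * (1 - T) * (S.A x a)ᴴ := by
    rw [(S.herm x a).eq, mul_sub, sub_mul, mul_one, S.proj x a]
  rw [PSDle, hsum, hgap]
  exact (posSemidef_one_sub_sum_subset (R.psd _) (R.sub _) _).mul_mul_conjTranspose_same _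

lemma progOpt_le_objective {k : ℕ} (hkn : k ≤ n) (A : (Fin n → F) → F → Mat d)
    (R : SubFamily n d F k) (ψ : (Fin 3 → Fin d) → ℂ)
    {Sh : (Fin n → F) → ((Fin k → F) → F) → Mat d} (h : Feasible hkn A Sh) :
    progOpt hkn A R (red1 ψ 0) ≤ objective hkn R (red1 ψ 0) Sh := by
  refine csInf_le ⟨0, ?_⟩ ⟨Sh, h, rfl⟩
  rintro _ ⟨Sh', -, rfl⟩
  exact div_nonneg (Finset.sum_nonneg fun x _ => Finset.sum_nonneg fun g _ =>
    rhoNormSq_red1_nonneg ψ _) (by positivity)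

theorem sum_rhoNormSq_le {G : Type*} [Fintype G] (S : Strategy 3 n d F) (x : Fin n → F)
    {Q : G → Mat d} (hQ : ∀ g, (Q g).PosSemidef) (hQ1 : (1 - ∑ g, Q g).PosSemidef)
    (val : G → F) :
    ∑ g, rhoNormSq (red1 S.ψ 0) (S.A x (val g) * psqrt (Q g) - psqrt (Q g)) ≤
      ∑ g, ∑ a, (if a ≠ val g then rTr ((Q g ⊗ₖ S.A x a) * red2 S.ψ 0 1) else 0) +
        4 * √(consistencyDefect (tripleVec S.ψ) (S.A x)) := by
  simp only [rhoNormSq_red1_mul_psqrt_sub S.ψ (S.herm x _) (hQ _),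
    sum_ne_rTr_kronecker_mul_red2 S.ψ (S.complete x)]
  exact sum_expect_conj_le (star_tripleVec_dotProduct_self S.unit) (S.isStarProjection x)
    (S.complete x) hQ hQ1 val

theorem sum_sqrt_consistencyDefect_le {K : Type*} [Field K] [Fintype K] (S : Strategy 3 n d K)
    {ε : ℝ} (hcons : 1 - ε ≤ consProb S) :
    ∑ x, √(consistencyDefect (tripleVec S.ψ) (S.A x)) ≤
      (Fintype.card K : ℝ) ^ n * (√2 * √ε) := by
  set δ : (Fin n → K) → ℝ := fun x => consistencyDefect (tripleVec S.ψ) (S.A x)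
  set N : ℝ := (Fintype.card K : ℝ) ^ n
  have hN : 0 < N := by positivity
  have hcard : ((Finset.univ : Finset (Fin n → K)).card : ℝ) = N := by simp [N]
  have hδ : ∑ x, δ x ≤ 2 * N * ε := by
    rw [consProb, le_div_iff₀ hN] at hcons
    calc ∑ x, δ x ≤ ∑ x, (2 - 2 * ∑ a, tExp S.ψ fun _ => S.A x a) :=
          Finset.sum_le_sum fun x _ =>
            consistencyDefect_le S.unit (S.isStarProjection x) (S.complete x)
      _ = 2 * N - 2 * ∑ x, ∑ a, tExp S.ψ fun _ => S.A x a := by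
          rw [Finset.sum_sub_distrib, ← Finset.mul_sum, Finset.sum_const, nsmul_eq_mul, hcard]
          ring
      _ ≤ 2 * N * ε := by linarith
  have hδ0 x : 0 ≤ δ x := Finset.sum_nonneg fun _ _ => sq_nonneg _
  calc ∑ x, √(δ x) = ∑ x, √(δ x) * √1 := by simp
    _ ≤ √(∑ x, δ x) * √(∑ _x : Fin n → K, 1) :=
        Real.sum_sqrt_mul_sqrt_le _ hδ0 fun _ => zero_le_one
    _ ≤ √(2 * N * ε) * √N := by
        rw [Finset.sum_const, nsmul_eq_mul, mul_one, hcard]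
        gcongr
    _ = N * (√2 * √ε) := by
        rw [← Real.sqrt_mul' _ hN.le, show 2 * N * ε * N = N ^ 2 * 2 * ε by ring,
          Real.sqrt_mul (by positivity), Real.sqrt_mul (by positivity), Real.sqrt_sq hN.le,
          mul_assoc]

theorem objective_rounding_le {k : ℕ} (S : Strategy 3 n d F) {ε : ℝ} (hcons : 1 - ε ≤ consProb S)
    (hkn : k ≤ n) (R : SubFamily n d F k) :
    objective hkn R (red1 S.ψ 0)
        (fun x g => S.A x (g (xle hkn x)) * psqrt (R.P (xgt k hkn x) g)) ≤
      incA hkn R S.A (red2 S.ψ 0 1) + 6 * √ε := by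
  have hN : 0 < (Fintype.card F : ℝ) ^ n := by positivity
  have h42 : 4 * √2 ≤ 6 := by
    nlinarith [Real.sq_sqrt (zero_le_two : (0 : ℝ) ≤ 2), Real.sqrt_nonneg 2]
  rw [objective, incA, div_add' _ _ _ hN.ne', div_le_div_iff_of_pos_right hN]
  calc _ ≤ ∑ x, (∑ g, ∑ a, (if a ≠ g (xle hkn x) then
          rTr ((R.P (xgt k hkn x) g ⊗ₖ S.A x a) * red2 S.ψ 0 1) else 0) +
            4 * √(consistencyDefect (tripleVec S.ψ) (S.A x))) :=
        Finset.sum_le_sum fun x _ => sum_rhoNormSq_le S x (R.psd _) (R.sub _) (· (xle hkn x))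
    _ ≤ _ := by
        rw [Finset.sum_add_distrib, ← Finset.mul_sum]
        nlinarith [sum_sqrt_consistencyDefect_le S hcons,
          mul_nonneg (sub_nonneg.2 h42) (mul_nonneg hN.le (Real.sqrt_nonneg ε))]

end Rounding

theorem statement6 :
    ∃ K : ℝ, 0 < K ∧
      ∀ (n d : ℕ) (F : Type) [Field F] [Fintype F] [DecidableEq F] (ε : ℝ)
        (S : Strategy 3 n d F),
        1 ≤ n → 1 ≤ d →
        1 - ε ≤ consProb S →
        ∀ (k : ℕ) (hk1 : 1 ≤ k) (hkn : k ≤ n) (R : SubFamily n d F k),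
          Feasible hkn S.A
            (fun x g => S.A x (g (xle hkn x)) * psqrt (R.P (xgt k hkn x) g)) ∧
          objective hkn R (red1 S.ψ 0)
              (fun x g => S.A x (g (xle hkn x)) * psqrt (R.P (xgt k hkn x) g)) ≤
            incA hkn R S.A (red2 S.ψ 0 1) + K * Real.sqrt ε ∧
          progOpt hkn S.A R (red1 S.ψ 0) ≤
            incA hkn R S.A (red2 S.ψ 0 1) + K * Real.sqrt ε := by
  refine ⟨6, by norm_num, fun n d F _ _ _ ε S _ _ hcons k _ hkn R => ?_⟩
  have hfeas := feasible_rounding S hkn R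
  have hobj := objective_rounding_le S hcons hkn R
  exact ⟨hfeas, hobj, (progOpt_le_objective hkn S.A R S.ψ hfeas).trans hobj⟩

end

end MIP
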